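/- arXiv:math/0610338 — 7 statements merged into one kernel-verified Lean document; each statement's English description precedes it below -/
import Mathlib

section
/- A metric space (X, ρ) is ultrametric if and only if it has the 0-dimensional Nagata property, i.e., for every pair of points y₁, y₂ ∈ X and every r > 0, if there exists x ∈ X with dist(yᵢ, B(x, r/2)) < r for i = 1, 2, then dist(y₁, y₂) < r. -/
open Metric Set

/-- A metric space is ultrametric iff it has the 0-dimensional Nagata
property: for all `y₁ y₂` and `r > 0`, if some `x` satisfies
`dist(yᵢ, B(x, r/2)) < r` for `i = 1,2`, then `dist(y₁,y₂) < r`. -/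
theorem ultrametric_iff_nagata_zero {X : Type*} [MetricSpace X] :
    (∀ x y z : X, dist x z ≤ max (dist x y) (dist y z)) ↔
    (∀ (r : ℝ), 0 < r → ∀ y₁ y₂ x : X,
      infDist y₁ (ball x (r / 2)) < r → infDist y₂ (ball x (r / 2)) < r →
      dist y₁ y₂ < r) := by
  constructor
  · intro hu r hr y₁ y₂ x h1 h2
    have hne : (ball x (r / 2)).Nonempty := ⟨x, mem_ball_self (by linarith)⟩
    obtain ⟨z₁, hz₁, hd₁⟩ := (infDist_lt_iff hne).mp h1
    obtain ⟨z₂, hz₂, hd₂⟩ := (infDist_lt_iff hne).mp h2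
    have hz₁x : dist z₁ x < r / 2 := mem_ball.mp hz₁
    have hz₂x : dist z₂ x < r / 2 := mem_ball.mp hz₂
    have h1x : dist y₁ x < r := lt_of_le_of_lt (hu y₁ z₁ x)
      (max_lt hd₁ (by linarith))
    have h2x : dist x y₂ < r := by
      have := hu x z₂ y₂
      rw [dist_comm x z₂, dist_comm z₂ y₂] at this
      exact lt_of_le_of_lt this (max_lt (by linarith) hd₂)
    exact lt_of_le_of_lt (hu y₁ x y₂) (max_lt h1x h2x)
  · intro hn x y z
    by_contra h
    push_neg at h
    set r := dist x z with hrdef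
    have hm : 0 ≤ max (dist x y) (dist y z) := le_max_of_le_left dist_nonneg
    have hr : 0 < r := lt_of_le_of_lt hm h
    have hy : y ∈ ball y (r / 2) := mem_ball_self (by linarith)
    have h1 : infDist x (ball y (r / 2)) < r :=
      lt_of_le_of_lt (infDist_le_dist_of_mem hy)
        (lt_of_le_of_lt (le_max_left _ _) h)
    have h2 : infDist z (ball y (r / 2)) < r :=
      lt_of_le_of_lt (infDist_le_dist_of_mem hy)
        (lt_of_le_of_lt (by rw [dist_comm]; exact le_max_right (dist x y) _) h)
    exact absurd (hn r hr x z y h1 h2) (lt_irrefl r)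
end

section
/- Let f : X → Y be a λ-Lipschitz map of metric spaces such that every fiber f⁻¹(y) is an ultrametric subspace, and such that dist(x, f⁻¹(y)) ≤ dist(f(x), y) for all x ∈ X and y ∈ f(X). Let B ⊆ Y and suppose every λr-component of B has diameter at most K. Then every r-component of f⁻¹(B) has diameter at most 4K + r. -/
open Metric Set

/-- `p` and `q` lie in the same `s`-component of `A`: they are joined by a finite chain
of points of `A` with consecutive distances less than `s`. -/
def ChainConn {X : Type*} [MetricSpace X] (A : Set X) (s : ℝ) (p q : X) : Prop :=
  ∃ l : List X, (∀ z ∈ l, z ∈ A) ∧ l.head? = some p ∧ l.getLast? = some q ∧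
    l.Chain' (fun u v => dist u v < s)

/-- If `f : X → Y` is `lam`-Lipschitz with ultrametric fibers and
`dist(x, f⁻¹(y)) ≤ dist(f x, y)` for `y` in the image, and every `lam·r`-component of
`B ⊆ Y` has diameter at most `K`, then every `r`-component of `f⁻¹(B)` has diameter
at most `4K + r`. -/
theorem preimage_components_bounded {X Y : Type*} [MetricSpace X] [MetricSpace Y]
    (f : X → Y) (lam : ℝ)
    (hLip : ∀ a b : X, dist (f a) (f b) ≤ lam * dist a b)
    (hultra : ∀ y : Y, ∀ p q s : X, p ∈ f ⁻¹' {y} → q ∈ f ⁻¹' {y} → s ∈ f ⁻¹' {y} →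
      dist p s ≤ max (dist p q) (dist q s))
    (hpar : ∀ (x : X), ∀ y ∈ Set.range f, infDist x (f ⁻¹' {y}) ≤ dist (f x) y)
    (B : Set Y) (r K : ℝ) (hr : 0 < r)
    (hB : ∀ y₁ y₂ : Y, ChainConn B (lam * r) y₁ y₂ → dist y₁ y₂ ≤ K) :
    ∀ x₁ x₂ : X, ChainConn (f ⁻¹' B) r x₁ x₂ → dist x₁ x₂ ≤ 4 * K + r := by
  rintro x₁ x₂ ⟨l, hlB, hhead, hlast, hchain⟩
  -- l = x₁ :: t
  obtain ⟨t, rfl⟩ : ∃ t, l = x₁ :: t := by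
    cases l with
    | nil => simp at hhead
    | cons a t =>
      have : a = x₁ := by simpa using hhead
      exact ⟨t, by rw [this]⟩
  have hx₁B : x₁ ∈ f ⁻¹' B := hlB x₁ (by simp)
  have hK0 : 0 ≤ K := by
    have := hB (f x₁) (f x₁)
      ⟨[f x₁], by simpa using hx₁B, rfl, rfl, List.isChain_singleton _⟩
    simpa using this
  apply le_of_forall_pos_le_add
  intro ε hε
  set δ := ε / 3 with hδdef
  have hδ : 0 < δ := by positivity
  -- the invariant carried along the chain
  set Good : X → Prop := fun z =>
    ChainConn B (lam * r) (f x₁) (f z) ∧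
      ∃ w, f w = f x₁ ∧ dist z w ≤ K + δ ∧ dist x₁ w ≤ 2 * K + 2 * δ + r with hGood
  have hFne : (f ⁻¹' {f x₁}).Nonempty := ⟨x₁, rfl⟩
  have step : ∀ u v : X, v ∈ f ⁻¹' B → Good u → dist u v < r → Good v := by
    intro u v hvB ⟨⟨m, hmB, hmh, hml, hmc⟩, wu, hwu, hdu, hdx⟩ huv
    have hCv : ChainConn B (lam * r) (f x₁) (f v) := by
      by_cases hlam : 0 < lam
      · refine ⟨m ++ [f v], ?_, ?_, ?_, ?_⟩
        · intro z hz
          rcases List.mem_append.mp hz with h | h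
          · exact hmB z h
          · simpa using (List.mem_singleton.mp h) ▸ hvB
        · rw [List.head?_append, hmh]; rfl
        · simp [List.getLast?_append]
        · show List.IsChain _ _
          rw [List.isChain_append]
          refine ⟨hmc, List.isChain_singleton _, ?_⟩
          intro a ha b hb
          rw [hml] at ha; simp at ha hb; subst ha; subst hb
          calc dist (f u) (f v) ≤ lam * dist u v := hLip u v
            _ < lam * r := by exact mul_lt_mul_of_pos_left huv hlam
      · have hfu : f u = f v := by
          have h1 : dist (f u) (f v) ≤ 0 :=
            (hLip u v).trans (mul_nonpos_of_nonpos_of_nonneg (not_lt.mp hlam) dist_nonneg)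
          exact dist_le_zero.mp (le_trans h1 le_rfl)
        exact hfu ▸ ⟨m, hmB, hmh, hml, hmc⟩
    refine ⟨hCv, ?_⟩
    have hdfv : dist (f v) (f x₁) ≤ K := by rw [dist_comm]; exact hB _ _ hCv
    have hinf : infDist v (f ⁻¹' {f x₁}) < K + δ :=
      lt_of_le_of_lt ((hpar v (f x₁) ⟨x₁, rfl⟩).trans hdfv) (by linarith)
    obtain ⟨w, hwF, hvw⟩ := (Metric.infDist_lt_iff hFne).mp hinf
    refine ⟨w, hwF, le_of_lt hvw, ?_⟩
    have hwuF : wu ∈ f ⁻¹' {f x₁} := hwu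
    have hx₁F : x₁ ∈ f ⁻¹' {f x₁} := rfl
    have h1 : dist wu w ≤ dist wu u + dist u v + dist v w := dist_triangle4 _ _ _ _
    have h2 : dist wu u = dist u wu := dist_comm _ _
    have h3 : dist x₁ w ≤ max (dist x₁ wu) (dist wu w) :=
      hultra (f x₁) x₁ wu w hx₁F hwuF hwF
    have h4 : dist wu w ≤ 2 * K + 2 * δ + r := by
      rw [h2] at h1; linarith [hvw.le]
    exact h3.trans (max_le hdx h4)
  -- propagate the invariant to the last element of the chain
  have claim : ∀ (t : List X) (u : X), Good u →
      List.Chain (fun a b => dist a b < r) u t → (∀ z ∈ t, z ∈ f ⁻¹' B) →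
      ∀ z, (u :: t).getLast? = some z → Good z := by
    intro t
    induction t with
    | nil =>
      intro u hu _ _ z hz
      have : u = z := by simpa using hz
      exact this ▸ hu
    | cons b t' ih =>
      intro u hu hc hmem z hz
      have hub : dist u b < r := (List.chain_cons.mp hc).1
      have hb : Good b := step u b (hmem b (by simp)) hu hub
      exact ih b hb (List.chain_cons.mp hc).2 (fun z hz => hmem z (by simp [hz])) z
        (by simpa using hz)
  have hGx₁ : Good x₁ := by
    refine ⟨⟨[f x₁], by simpa using hx₁B, rfl, rfl, List.isChain_singleton _⟩,
      x₁, rfl, by simp; linarith, by simp; linarith⟩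
  have hGx₂ : Good x₂ := by
    refine claim t x₁ hGx₁ hchain ?_ x₂ hlast
    intro z hz; exact hlB z (by simp [hz])
  obtain ⟨_, w, hw, h1, h2⟩ := hGx₂
  have := dist_triangle x₁ w x₂
  rw [dist_comm w x₂] at this
  have : dist x₁ x₂ ≤ 3 * K + 3 * δ + r := by linarith
  have hδ3 : 3 * δ = ε := by rw [hδdef]; ring
  linarith
end

section
/- Let (X, ρ) be a metric space with the n-dimensional Nagata property, r > 0, and let A be a maximal r-separated subset of X (i.e., ρ(x, y) ≥ r for all distinct x, y ∈ A, and A is maximal with this property). Then the family of open balls {B(y, r) : y ∈ A} covers X, and every ball B(x, r/2) intersects at most n + 1 elements of the family. -/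
open Metric Set

/-- `X` has the `n`-dimensional Nagata property: for every `r > 0` and every
configuration of `n+2` points `y` such that some `x` satisfies
`dist(yᵢ, B(x, r/2)) < r` for all `i`, two of the points are at distance less than `r`. -/
def NagataProperty (X : Type*) [MetricSpace X] (n : ℕ) : Prop :=
  ∀ (r : ℝ), 0 < r → ∀ (y : Fin (n + 2) → X) (x : X),
    (∀ i, infDist (y i) (ball x (r / 2)) < r) →
    ∃ i j, i ≠ j ∧ dist (y i) (y j) < r

/-- If `X` has the `n`-dimensional Nagata property, `r > 0` and `A` is a
maximal `r`-separated subset, then the open balls `B(y, r)`, `y ∈ A`, cover `X` and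
every ball `B(x, r/2)` meets at most `n+1` of them. -/
theorem maximal_separated_cover {X : Type*} [MetricSpace X] (n : ℕ)
    (hN : NagataProperty X n) (r : ℝ) (hr : 0 < r) (A : Set X)
    (hsep : ∀ a ∈ A, ∀ b ∈ A, a ≠ b → r ≤ dist a b)
    (hmax : ∀ B : Set X, A ⊆ B → (∀ a ∈ B, ∀ b ∈ B, a ≠ b → r ≤ dist a b) → B = A) :
    (∀ x : X, ∃ y ∈ A, x ∈ ball y r) ∧
    (∀ x : X, {y ∈ A | (ball x (r / 2) ∩ ball y r).Nonempty}.encard ≤ n + 1) := by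
  constructor
  · intro x
    by_contra h
    push_neg at h
    have hx : ∀ a ∈ A, r ≤ dist x a := by
      intro a ha
      have := h a ha
      rw [mem_ball] at this
      linarith [not_lt.mp this]
    have hxA : x ∉ A := fun hxa => absurd (hx x hxa) (by simp [hr])
    have : insert x A = A := by
      apply hmax _ (subset_insert x A)
      rintro a (rfl | ha) b (rfl | hb) hab
      · exact absurd rfl hab
      · exact hx b hb
      · rw [dist_comm]; exact hx a ha
      · exact hsep a ha b hb hab
    exact hxA (this ▸ mem_insert x A)
  · intro x
    by_contra h
    push_neg at h
    have h2 : (n + 2 : ℕ) ≤ {y ∈ A | (ball x (r / 2) ∩ ball y r).Nonempty}.encard := by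
      have h3 := Order.add_one_le_of_lt h
      calc ((n + 2 : ℕ) : ℕ∞) = (n : ℕ∞) + 1 + 1 := by push_cast; ring
        _ ≤ _ := h3
    obtain ⟨t, hts, htcard⟩ := Set.exists_subset_encard_eq h2
    have htfin : t.Finite := Set.finite_of_encard_eq_coe htcard
    have hcard : htfin.toFinset.card = n + 2 := by
      have : (htfin.toFinset.card : ℕ∞) = ((n + 2 : ℕ) : ℕ∞) := by
        rw [← Set.Finite.encard_eq_coe_toFinset_card htfin, htcard]
      exact_mod_cast this
    let e := htfin.toFinset.equivFinOfCardEq hcard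
    set y : Fin (n + 2) → X := fun i => (e.symm i : X) with hy
    have hyt : ∀ i, y i ∈ t := fun i => htfin.mem_toFinset.mp (e.symm i).2
    have hinj : Function.Injective y := fun i j hij => by
      have : e.symm i = e.symm j := Subtype.ext hij
      simpa using congrArg e this
    obtain ⟨i, j, hne, hlt⟩ := hN r hr y x (fun i => by
      obtain ⟨z, hz1, hz2⟩ := (hts (hyt i)).2
      calc infDist (y i) (ball x (r / 2)) ≤ dist (y i) z := infDist_le_dist_of_mem hz1
        _ < r := by rw [dist_comm]; exact hz2)
    exact absurd hlt (not_lt.mpr (hsep _ (hts (hyt i)).1 _ (hts (hyt j)).1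
      (fun hh => hne (hinj hh))))
end

section
/- Let K > 16 be a constant such that 4(n+1) + K·√n ≤ K·n for all integers n ≥ 2. Then for every integer k there is a word w in the generators a, b and their inverses (of the discrete Heisenberg group H₃(ℤ)) such that w = cᵏ in H₃(ℤ) and the length of w is at most K·√|k|. -/
open Matrix

/-- The ambient group `SL₃(ℤ)` in which we realize the discrete Heisenberg group. -/
abbrev Heis : Type := Matrix.SpecialLinearGroup (Fin 3) ℤ

/-- The generator `a = E₁₂` of the discrete Heisenberg group `H₃(ℤ)`. -/
def HeisA : Heis := ⟨!![1, 1, 0; 0, 1, 0; 0, 0, 1], by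
  simp [Matrix.det_fin_three, Matrix.vecHead, Matrix.vecTail]⟩

/-- The generator `b = E₂₃` of the discrete Heisenberg group `H₃(ℤ)`. -/
def HeisB : Heis := ⟨!![1, 0, 0; 0, 1, 1; 0, 0, 1], by
  simp [Matrix.det_fin_three, Matrix.vecHead, Matrix.vecTail]⟩

/-- The central element `c = E₁₃ = [a,b]` of the discrete Heisenberg group `H₃(ℤ)`. -/
def HeisC : Heis := ⟨!![1, 0, 1; 0, 1, 0; 0, 0, 1], by
  simp [Matrix.det_fin_three, Matrix.vecHead, Matrix.vecTail]⟩


def Hmat (x y z : ℤ) : Heis := ⟨!![1, x, z; 0, 1, y; 0, 0, 1], by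
  simp [Matrix.det_fin_three, Matrix.vecHead, Matrix.vecTail, Function.comp]⟩

lemma Hmat_mul (x y z x' y' z' : ℤ) :
    Hmat x y z * Hmat x' y' z' = Hmat (x + x') (y + y') (z + z' + x * y') := by
  apply Subtype.ext
  show (Hmat x y z : Matrix (Fin 3) (Fin 3) ℤ) * (Hmat x' y' z') = _
  ext i j
  fin_cases i <;> fin_cases j <;>
    simp [Hmat, Matrix.mul_apply, Fin.sum_univ_three, Matrix.vecHead, Matrix.vecTail,
      Function.comp] <;> ring

lemma Hmat_one : Hmat 0 0 0 = 1 := by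
  apply Subtype.ext
  show (Hmat 0 0 0 : Matrix (Fin 3) (Fin 3) ℤ) = 1
  ext i j
  fin_cases i <;> fin_cases j <;>
    simp [Hmat, Matrix.one_apply, Matrix.vecHead, Matrix.vecTail, Function.comp]

lemma HeisA_eq : HeisA = Hmat 1 0 0 := rfl
lemma HeisB_eq : HeisB = Hmat 0 1 0 := rfl
lemma HeisC_eq : HeisC = Hmat 0 0 1 := rfl

lemma Hmat_inv (x y z : ℤ) : (Hmat x y z)⁻¹ = Hmat (-x) (-y) (x * y - z) := by
  apply inv_eq_of_mul_eq_one_right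
  rw [Hmat_mul]
  rw [show x + -x = 0 by ring, show y + -y = 0 by ring, show z + (x*y-z) + x * (-y) = 0 by ring,
    Hmat_one]

lemma Hmat_zpowA (m : ℤ) : HeisA ^ m = Hmat m 0 0 := by
  induction m using Int.induction_on with
  | zero => simpa using Hmat_one.symm
  | succ n ih => rw [_root_.zpow_add_one, ih, HeisA_eq, Hmat_mul]; norm_num
  | pred n ih => rw [_root_.zpow_sub_one, ih, HeisA_eq, Hmat_inv, Hmat_mul]; norm_num; congr 1 <;> ring
lemma Hmat_zpowB (m : ℤ) : HeisB ^ m = Hmat 0 m 0 := by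
  induction m using Int.induction_on with
  | zero => simpa using Hmat_one.symm
  | succ n ih => rw [_root_.zpow_add_one, ih, HeisB_eq, Hmat_mul]; norm_num
  | pred n ih => rw [_root_.zpow_sub_one, ih, HeisB_eq, Hmat_inv, Hmat_mul]; norm_num; congr 1 <;> ring
lemma Hmat_zpowC (m : ℤ) : HeisC ^ m = Hmat 0 0 m := by
  induction m using Int.induction_on with
  | zero => simpa using Hmat_one.symm
  | succ n ih => rw [_root_.zpow_add_one, ih, HeisC_eq, Hmat_mul]; norm_num
  | pred n ih => rw [_root_.zpow_sub_one, ih, HeisC_eq, Hmat_inv, Hmat_mul]; norm_num; congr 1 <;> ring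

/-- A word spelling `g ^ m`. -/
def zword (g : Heis) (m : ℤ) : List Heis := List.replicate m.natAbs (if 0 ≤ m then g else g⁻¹)

lemma zword_prod (g : Heis) (m : ℤ) : (zword g m).prod = g ^ m := by
  rw [zword, List.prod_replicate]
  split
  · rw [← zpow_natCast]; congr 1; omega
  · rw [inv_pow, ← zpow_natCast, ← _root_.zpow_neg]; congr 1; omega

lemma zword_length (g : Heis) (m : ℤ) : (zword g m).length = m.natAbs := by
  simp [zword]

lemma zword_mem (g : Heis) (m : ℤ) : ∀ x ∈ zword g m, x = g ∨ x = g⁻¹ := by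
  intro x hx
  have := List.eq_of_mem_replicate hx
  split at this <;> simp [this]

/-- The commutator word `[a^m, b^n]`, spelling `c^(m*n)`. -/
def chunk (m n : ℤ) : List Heis :=
  zword HeisA m ++ zword HeisB n ++ zword HeisA (-m) ++ zword HeisB (-n)

lemma chunk_prod (m n : ℤ) : (chunk m n).prod = HeisC ^ (m * n) := by
  simp only [chunk, List.prod_append, zword_prod, Hmat_zpowA, Hmat_zpowB, Hmat_zpowC, Hmat_mul]
  congr 1 <;> ring

lemma chunk_length (m n : ℤ) : (chunk m n).length = 2 * m.natAbs + 2 * n.natAbs := by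
  simp [chunk, zword_length]; omega

lemma chunk_mem (m n : ℤ) :
    ∀ g ∈ chunk m n, g = HeisA ∨ g = HeisA⁻¹ ∨ g = HeisB ∨ g = HeisB⁻¹ := by
  intro g hg
  simp only [chunk, List.mem_append] at hg
  rcases hg with ((h | h) | h) | h
  · rcases zword_mem _ _ _ h with h | h <;> tauto
  · rcases zword_mem _ _ _ h with h | h <;> tauto
  · rcases zword_mem _ _ _ h with h | h <;> tauto
  · rcases zword_mem _ _ _ h with h | h <;> tauto

lemma main_aux (K : ℝ) (hK : 16 < K)
    (hK' : ∀ n : ℕ, 2 ≤ n → 4 * ((n : ℝ) + 1) + K * Real.sqrt n ≤ K * n) :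
    ∀ N : ℕ, ∀ k : ℤ, k.natAbs = N → ∃ w : List Heis,
      (∀ g ∈ w, g = HeisA ∨ g = HeisA⁻¹ ∨ g = HeisB ∨ g = HeisB⁻¹) ∧
      w.prod = HeisC ^ k ∧
      (w.length : ℝ) ≤ K * Real.sqrt |(k : ℝ)| := by
  intro N
  induction N using Nat.strong_induction_on with
  | _ N ih =>
  intro k hkN
  by_cases hk0 : k = 0
  · refine ⟨[], by simp, by simp [hk0], by simp [hk0]⟩
  by_cases hk3 : k.natAbs ≤ 3
  · refine ⟨chunk 1 k, chunk_mem _ _, by rw [chunk_prod, one_mul], ?_⟩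
    have h1 : (1:ℝ) ≤ |(k:ℝ)| := by
      rw [← Int.cast_abs]
      exact_mod_cast Int.one_le_abs (by omega)
    have h2 : (1:ℝ) ≤ Real.sqrt |(k:ℝ)| := by
      rw [show (1:ℝ) = Real.sqrt 1 by simp]
      exact Real.sqrt_le_sqrt h1
    have h3 : ((chunk 1 k).length : ℝ) ≤ 8 := by
      rw [chunk_length]
      have : k.natAbs ≤ 3 := hk3
      push_cast
      norm_num
      linarith [show |(k:ℝ)| ≤ 3 from by rw [← Int.cast_abs]; exact_mod_cast (abs_le.mpr ⟨by omega, by omega⟩ : |k| ≤ 3)]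
    nlinarith [Real.sqrt_nonneg |(k:ℝ)|]
  · -- general case
    set n := k.natAbs.sqrt with hn
    have h4 : 4 ≤ k.natAbs := by omega
    have hn2 : 2 ≤ n := by
      have h := Nat.sqrt_le_sqrt h4
      simpa [hn] using h.trans_eq' (by norm_num [Nat.sqrt] )
    have hnpos : (0:ℤ) < (n:ℤ) := by exact_mod_cast Nat.pos_of_ne_zero (by omega)
    set r := k % (n:ℤ) with hr
    set m := k / (n:ℤ) with hm
    have hr0 : 0 ≤ r := Int.emod_nonneg k (by omega)
    have hrlt : r < n := Int.emod_lt_of_pos k hnpos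
    have hsq : n * n ≤ k.natAbs := by have h := Nat.sqrt_le' k.natAbs; rw [pow_two] at h; exact h
    have hklt : k.natAbs < (n+1)*(n+1) := by
      have h := Nat.lt_succ_sqrt' k.natAbs
      rw [pow_two] at h
      simpa [Nat.succ_eq_add_one] using h
    have hnlt : n < k.natAbs := by nlinarith
    have hrn : r.natAbs < n := by omega
    have hdm : (n:ℤ) * m + r = k := Int.mul_ediv_add_emod k (n:ℤ)
    obtain ⟨w, hw1, hw2, hw3⟩ := ih r.natAbs (by omega) r rfl
    refine ⟨chunk m n ++ w, ?_, ?_, ?_⟩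
    · intro g hg
      rcases List.mem_append.mp hg with h | h
      · exact chunk_mem _ _ g h
      · exact hw1 g h
    · rw [List.prod_append, chunk_prod, hw2, ← _root_.zpow_add]
      congr 1
      linarith [hdm]
    · -- length bound
      have hkabs : |k| = ((k.natAbs : ℕ) : ℤ) := Int.abs_eq_natAbs k
      have hmabs : m.natAbs ≤ n + 2 := by
        have h1 : |m| * (n:ℤ) = |k - r| := by
          rw [← abs_of_nonneg (le_of_lt hnpos), ← abs_mul]
          congr 1
          linarith [hdm]
        have h2 : |k - r| ≤ |k| + r := by
          calc |k - r| ≤ |k| + |r| := abs_sub k r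
          _ = |k| + r := by rw [abs_of_nonneg hr0]
        have h3 : |k| ≤ (n:ℤ)*n + 2*n := by
          rw [hkabs]
          push_cast
          have : (k.natAbs : ℤ) < ((n:ℤ)+1)*((n:ℤ)+1) := by exact_mod_cast hklt
          nlinarith
        have h4 : |m| * (n:ℤ) ≤ (n:ℤ)*n + 3*n - 1 := by
          rw [h1]; linarith
        have h5 : |m| ≤ (n:ℤ) + 2 := by
          by_contra hcon
          push_neg at hcon
          have : ((n:ℤ) + 3) * n ≤ |m| * n := by
            apply mul_le_mul_of_nonneg_right _ (le_of_lt hnpos)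
            omega
          nlinarith
        have : (m.natAbs : ℤ) ≤ (n:ℤ) + 2 := by rwa [Int.abs_eq_natAbs] at h5
        exact_mod_cast this
      have hNcast : |(k:ℝ)| = (k.natAbs : ℝ) := by simp [Nat.cast_natAbs]
      have hrcast : |(r:ℝ)| = (r.natAbs : ℝ) := by simp [Nat.cast_natAbs]
      have hK0 : (0:ℝ) ≤ K := by linarith
      have hsqrtn : (n:ℝ) ≤ Real.sqrt |(k:ℝ)| := by
        rw [hNcast]
        have h := Real.sqrt_le_sqrt (show ((n*n : ℕ) : ℝ) ≤ (k.natAbs : ℝ) by exact_mod_cast hsq)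
        rwa [show ((n*n : ℕ) : ℝ) = (n:ℝ)^2 by push_cast; ring,
          Real.sqrt_sq (by positivity)] at h
      have hsr : Real.sqrt |(r:ℝ)| ≤ Real.sqrt n := by
        apply Real.sqrt_le_sqrt
        rw [hrcast]
        exact_mod_cast le_of_lt hrn
      have hwlen : (w.length : ℝ) ≤ K * Real.sqrt n :=
        le_trans hw3 (mul_le_mul_of_nonneg_left hsr hK0)
      have hclen : (((chunk m n).length : ℕ) : ℝ) ≤ 4*((n:ℝ)+1) := by
        rw [chunk_length]
        simp only [Int.natAbs_natCast]
        have : (m.natAbs : ℝ) ≤ (n:ℝ) + 2 := by exact_mod_cast hmabs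
        push_cast
        linarith
      have hKn := hK' n hn2
      have hfin : K * (n:ℝ) ≤ K * Real.sqrt |(k:ℝ)| :=
        mul_le_mul_of_nonneg_left hsqrtn hK0
      rw [List.length_append]
      push_cast
      linarith


/-- Let `K > 16` satisfy `4(n+1) + K√n ≤ K·n` for all integers `n ≥ 2`.
Then for every integer `k` there is a word `w` in `a, b` and their inverses with
`w = cᵏ` in `H₃(ℤ)` and length at most `K·√|k|`. -/
theorem heisenberg_central_word_upper (K : ℝ) (hK : 16 < K)
    (hK' : ∀ n : ℕ, 2 ≤ n → 4 * ((n : ℝ) + 1) + K * Real.sqrt n ≤ K * n) :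
    ∀ k : ℤ, ∃ w : List Heis,
      (∀ g ∈ w, g = HeisA ∨ g = HeisA⁻¹ ∨ g = HeisB ∨ g = HeisB⁻¹) ∧
      w.prod = HeisC ^ k ∧
      (w.length : ℝ) ≤ K * Real.sqrt |(k : ℝ)| :=
  fun k => main_aux K hK hK' k.natAbs k rfl
end

section
/- If w is a word in the generators a, b and their inverses of the discrete Heisenberg group H₃(ℤ) such that w = cᵏ in H₃(ℤ) for some integer k, then the length of w is at least 2·√|k|. -/
open Matrix

lemma HeisA_inv : (HeisA⁻¹ : Heis) = ⟨!![1, -1, 0; 0, 1, 0; 0, 0, 1], by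
    simp [Matrix.det_fin_three, Matrix.vecHead, Matrix.vecTail]⟩ := by
  apply inv_eq_of_mul_eq_one_right
  ext i j
  fin_cases i <;> fin_cases j <;>
    simp [HeisA, Matrix.mul_apply, Fin.sum_univ_three, Matrix.vecHead, Matrix.vecTail] <;> rfl

lemma HeisB_inv : (HeisB⁻¹ : Heis) = ⟨!![1, 0, 0; 0, 1, -1; 0, 0, 1], by
    simp [Matrix.det_fin_three, Matrix.vecHead, Matrix.vecTail]⟩ := by
  apply inv_eq_of_mul_eq_one_right
  ext i j
  fin_cases i <;> fin_cases j <;>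
    simp [HeisB, Matrix.mul_apply, Fin.sum_univ_three, Matrix.vecHead, Matrix.vecTail] <;> rfl

lemma HeisC_inv : (HeisC⁻¹ : Heis) = ⟨!![1, 0, -1; 0, 1, 0; 0, 0, 1], by
    simp [Matrix.det_fin_three, Matrix.vecHead, Matrix.vecTail]⟩ := by
  apply inv_eq_of_mul_eq_one_right
  ext i j
  fin_cases i <;> fin_cases j <;>
    simp [HeisC, Matrix.mul_apply, Fin.sum_univ_three, Matrix.vecHead, Matrix.vecTail] <;> rfl

lemma HeisC_zpow (k : ℤ) : (HeisC ^ k : Heis) = ⟨!![1, 0, k; 0, 1, 0; 0, 0, 1], by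
    simp [Matrix.det_fin_three, Matrix.vecHead, Matrix.vecTail]⟩ := by
  induction k using Int.induction_on with
  | zero =>
    rw [zpow_zero]
    ext i j
    fin_cases i <;> fin_cases j <;>
      simp [Matrix.one_apply, Matrix.vecHead, Matrix.vecTail]
  | succ n ih =>
    rw [_root_.zpow_add_one, ih]
    ext i j
    erw [Matrix.SpecialLinearGroup.coe_mul]
    fin_cases i <;> fin_cases j <;>
      simp [HeisC, Matrix.mul_apply, Fin.sum_univ_three, Matrix.vecHead, Matrix.vecTail] <;> ring
  | pred n ih =>
    rw [_root_.zpow_sub_one, ih, HeisC_inv]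
    ext i j
    erw [Matrix.SpecialLinearGroup.coe_mul]
    fin_cases i <;> fin_cases j <;>
      simp [Matrix.mul_apply, Fin.sum_univ_three, Matrix.vecHead, Matrix.vecTail] <;> ring

set_option maxHeartbeats 2000000 in
lemma heis_key : ∀ (w : List Heis),
    (∀ g ∈ w, g = HeisA ∨ g = HeisA⁻¹ ∨ g = HeisB ∨ g = HeisB⁻¹) →
    ∃ A B : ℕ, A + B = w.length ∧
      (w.prod : Matrix (Fin 3) (Fin 3) ℤ) 1 1 = 1 ∧
      (w.prod : Matrix (Fin 3) (Fin 3) ℤ) 2 2 = 1 ∧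
      (w.prod : Matrix (Fin 3) (Fin 3) ℤ) 2 1 = 0 ∧
      |(w.prod : Matrix (Fin 3) (Fin 3) ℤ) 0 1| ≤ (A : ℤ) ∧
      |(w.prod : Matrix (Fin 3) (Fin 3) ℤ) 1 2| ≤ (B : ℤ) ∧
      |(w.prod : Matrix (Fin 3) (Fin 3) ℤ) 0 2| ≤ (A : ℤ) * B := by
  intro w
  induction w with
  | nil =>
    intro _
    exact ⟨0, 0, by simp [Matrix.one_apply]⟩
  | cons g t ih =>
    intro hw
    obtain ⟨A, B, hAB, h11, h22, h21, h01, h12, h02⟩ :=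
      ih (fun x hx => hw x (List.mem_cons_of_mem _ hx))
    rw [abs_le] at h01 h12 h02
    have hprod : ((g :: t).prod : Matrix (Fin 3) (Fin 3) ℤ)
        = (g : Matrix (Fin 3) (Fin 3) ℤ) * (t.prod : Matrix (Fin 3) (Fin 3) ℤ) := by
      rw [List.prod_cons]; rfl
    rcases hw g (List.mem_cons_self) with h | h | h | h
    · refine ⟨A + 1, B, by simp [hAB]; omega, ?_, ?_, ?_, ?_, ?_, ?_⟩ <;>
        rw [hprod, h] <;>
        simp [HeisA, Matrix.mul_apply, Fin.sum_univ_three, Matrix.vecHead, Matrix.vecTail,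
          h11, h22, h21] <;>
        rw [abs_le] <;> constructor <;> push_cast <;> nlinarith [h01.1, h01.2, h12.1, h12.2,
          h02.1, h02.2, Nat.cast_nonneg (α := ℤ) A, Nat.cast_nonneg (α := ℤ) B]
    · refine ⟨A + 1, B, by simp [hAB]; omega, ?_, ?_, ?_, ?_, ?_, ?_⟩ <;>
        rw [hprod, h, HeisA_inv] <;>
        simp [Matrix.mul_apply, Fin.sum_univ_three, Matrix.vecHead, Matrix.vecTail,
          h11, h22, h21] <;>
        rw [abs_le] <;> constructor <;> push_cast <;> nlinarith [h01.1, h01.2, h12.1, h12.2,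
          h02.1, h02.2, Nat.cast_nonneg (α := ℤ) A, Nat.cast_nonneg (α := ℤ) B]
    · refine ⟨A, B + 1, by simp [hAB]; omega, ?_, ?_, ?_, ?_, ?_, ?_⟩ <;>
        rw [hprod, h] <;>
        simp [HeisB, Matrix.mul_apply, Fin.sum_univ_three, Matrix.vecHead, Matrix.vecTail,
          h11, h22, h21] <;>
        rw [abs_le] <;> constructor <;> push_cast <;> nlinarith [h01.1, h01.2, h12.1, h12.2,
          h02.1, h02.2, Nat.cast_nonneg (α := ℤ) A, Nat.cast_nonneg (α := ℤ) B]
    · refine ⟨A, B + 1, by simp [hAB]; omega, ?_, ?_, ?_, ?_, ?_, ?_⟩ <;>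
        rw [hprod, h, HeisB_inv] <;>
        simp [Matrix.mul_apply, Fin.sum_univ_three, Matrix.vecHead, Matrix.vecTail,
          h11, h22, h21] <;>
        rw [abs_le] <;> constructor <;> push_cast <;> nlinarith [h01.1, h01.2, h12.1, h12.2,
          h02.1, h02.2, Nat.cast_nonneg (α := ℤ) A, Nat.cast_nonneg (α := ℤ) B]

/-- If a word `w` in `a, b` and their inverses equals `cᵏ` in `H₃(ℤ)`,
then the length of `w` is at least `2·√|k|`. -/
theorem heisenberg_central_word_lower (k : ℤ) (w : List Heis)
    (hw : ∀ g ∈ w, g = HeisA ∨ g = HeisA⁻¹ ∨ g = HeisB ∨ g = HeisB⁻¹)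
    (hprod : w.prod = HeisC ^ k) :
    2 * Real.sqrt |(k : ℝ)| ≤ (w.length : ℝ) := by
  obtain ⟨A, B, hAB, -, -, -, -, -, h02⟩ := heis_key w hw
  have hk : (w.prod : Matrix (Fin 3) (Fin 3) ℤ) 0 2 = k := by
    rw [hprod, HeisC_zpow]; rfl
  rw [hk] at h02
  have hL : (A : ℝ) + B = (w.length : ℝ) := by exact_mod_cast congrArg (Nat.cast : ℕ → ℝ) hAB
  have hk' : |(k : ℝ)| ≤ (A : ℝ) * B := by
    have : ((|k| : ℤ) : ℝ) ≤ ((A * B : ℤ) : ℝ) := by exact_mod_cast h02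
    push_cast at this
    simpa using this
  have h4 : 4 * |(k : ℝ)| ≤ (w.length : ℝ) ^ 2 := by
    nlinarith [sq_nonneg ((A : ℝ) - B)]
  have hx : (2 * Real.sqrt |(k : ℝ)|) ^ 2 = 4 * |(k : ℝ)| := by
    rw [mul_pow, Real.sq_sqrt (abs_nonneg _)]; ring
  nlinarith [Real.sqrt_nonneg |(k : ℝ)|, Nat.cast_nonneg (α := ℝ) w.length]
end

section
/- Let d be the word metric on H₃(ℤ) with respect to the generating set {a, b, c} restricted to the central subgroup ⟨c⟩ ≅ ℤ. Then there exist constants 0 < C₁ ≤ C₂ such that C₁·√|m − n| ≤ d(cᵐ, cⁿ) ≤ C₂·√|m − n| for all integers m, n; i.e., (⟨c⟩, d) is bi-Lipschitz equivalent to ℤ with the metric (m, n) ↦ √|m − n|. -/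
open Matrix

/-- The word "metric": `wordDist S g h` is the least length of a word in the
(symmetric) generating set `S` representing `g⁻¹h`. -/
noncomputable def wordDist {G : Type*} [Group G] (S : Set G) (g h : G) : ℕ :=
  sInf {n : ℕ | ∃ l : List G, (∀ s ∈ l, s ∈ S) ∧ l.length = n ∧ g⁻¹ * h = l.prod}

/-- General upper unitriangular element. -/
def H (x y z : ℤ) : Heis := ⟨!![1,x,z;0,1,y;0,0,1], by
  simp [Matrix.det_fin_three, Matrix.vecHead, Matrix.vecTail]⟩

lemma H_mul (x y z x' y' z' : ℤ) :
    H x y z * H x' y' z' = H (x+x') (y+y') (z+z'+x*y') := by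
  apply Subtype.ext
  show (H x y z).1 * (H x' y' z').1 = _
  simp only [H]
  ext i j
  fin_cases i <;> fin_cases j <;>
    simp [Matrix.mul_apply, Fin.sum_univ_three, Matrix.vecHead, Matrix.vecTail] <;> ring

lemma H_one : H 0 0 0 = 1 := by
  apply Subtype.ext
  simp only [H]
  ext i j
  fin_cases i <;> fin_cases j <;>
    simp [Matrix.one_apply, Matrix.vecHead, Matrix.vecTail]

lemma H_inv (x y z : ℤ) : (H x y z)⁻¹ = H (-x) (-y) (x*y - z) := by
  apply inv_eq_of_mul_eq_one_right
  rw [H_mul, show x + -x = 0 by ring, show y + -y = 0 by ring,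
    show z + (x*y - z) + x*(-y) = 0 by ring]
  exact H_one

lemma H_z (x y z : ℤ) : (H x y z).1 0 2 = z := by simp [H]

lemma HA : HeisA = H 1 0 0 := rfl
lemma HB : HeisB = H 0 1 0 := rfl
lemma HC : HeisC = H 0 0 1 := rfl

lemma H_pow_A (x : ℤ) (r : ℕ) : (H x 0 0) ^ r = H (r * x) 0 0 := by
  induction r with
  | zero => simpa using H_one.symm
  | succ n ih => rw [pow_succ, ih, H_mul]; congr 1 <;> push_cast <;> ring

lemma H_pow_B (y : ℤ) (r : ℕ) : (H 0 y 0) ^ r = H 0 (r * y) 0 := by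
  induction r with
  | zero => simpa using H_one.symm
  | succ n ih => rw [pow_succ, ih, H_mul]; congr 1 <;> push_cast <;> ring

lemma H_pow_Cnat (r : ℕ) : (H 0 0 1) ^ r = H 0 0 (r : ℤ) := by
  induction r with
  | zero => simpa using H_one.symm
  | succ n ih => rw [pow_succ, ih, H_mul]; congr 1 <;> push_cast <;> ring

lemma H_zpow_C (k : ℤ) : (H 0 0 1) ^ k = H 0 0 k := by
  induction k using Int.induction_on with
  | zero => simpa using H_one.symm
  | succ n ih => rw [_root_.zpow_add_one, ih, H_mul]; norm_num
  | pred n ih => rw [_root_.zpow_sub_one, ih, H_inv, H_mul]; congr 1 <;> ring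

/-- The symmetric generating set. -/
def HeisS : Set Heis := {HeisA, HeisA⁻¹, HeisB, HeisB⁻¹, HeisC, HeisC⁻¹}

lemma gen_form {s : Heis} (hs : s ∈ HeisS) :
    ∃ x y z : ℤ, s = H x y z ∧ |x| ≤ 1 ∧ |y| ≤ 1 ∧ |z| ≤ 1 := by
  simp only [HeisS, Set.mem_insert_iff, Set.mem_singleton_iff] at hs
  rcases hs with h | h | h | h | h | h <;> subst h
  · exact ⟨1, 0, 0, HA, by norm_num⟩
  · exact ⟨-1, 0, 0, by rw [HA, H_inv]; norm_num, by norm_num⟩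
  · exact ⟨0, 1, 0, HB, by norm_num⟩
  · exact ⟨0, -1, 0, by rw [HB, H_inv]; norm_num, by norm_num⟩
  · exact ⟨0, 0, 1, HC, by norm_num⟩
  · exact ⟨0, 0, -1, by rw [HC, H_inv]; norm_num, by norm_num⟩

lemma S_inv {s : Heis} (hs : s ∈ HeisS) : s⁻¹ ∈ HeisS := by
  simp only [HeisS, Set.mem_insert_iff, Set.mem_singleton_iff] at hs ⊢
  rcases hs with h | h | h | h | h | h <;> subst h <;> simp

/-- Any word of length `L` in the generators has top-right entry at most `L²`. -/
lemma prod_bound : ∀ l : List Heis, (∀ s ∈ l, s ∈ HeisS) →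
    ∃ x y z : ℤ, l.prod = H x y z ∧ |x| ≤ (l.length : ℤ) ∧ |y| ≤ (l.length : ℤ) ∧
      |z| ≤ (l.length : ℤ)^2 := by
  intro l
  induction l with
  | nil => intro _; exact ⟨0, 0, 0, H_one.symm, by norm_num⟩
  | cons s t ih =>
    intro hl
    obtain ⟨x, y, z, hp, hx, hy, hz⟩ := ih (fun u hu => hl u (List.mem_cons_of_mem s hu))
    obtain ⟨a, b, c, hs, ha, hb, hc⟩ := gen_form (hl s List.mem_cons_self)
    refine ⟨a + x, b + y, c + z + a * y, ?_, ?_, ?_, ?_⟩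
    · rw [List.prod_cons, hp, hs, H_mul]
    · calc |a + x| ≤ |a| + |x| := abs_add_le _ _
        _ ≤ (((s :: t).length : ℤ)) := by simp; omega
    · calc |b + y| ≤ |b| + |y| := abs_add_le _ _
        _ ≤ (((s :: t).length : ℤ)) := by simp; omega
    · have h1 : |c + z + a * y| ≤ |c| + |z| + |a| * |y| := by
        calc |c + z + a * y| ≤ |c + z| + |a * y| := abs_add_le _ _
          _ ≤ |c| + |z| + |a| * |y| := by rw [abs_mul]; exact add_le_add_left (abs_add_le c z) _
      have hL : (0:ℤ) ≤ (t.length : ℤ) := Int.natCast_nonneg _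
      have hay : |a| * |y| ≤ 1 * (t.length : ℤ) :=
        mul_le_mul ha hy (abs_nonneg _) (by norm_num)
      simp only [List.length_cons]
      push_cast
      nlinarith [hz, hc, h1]

lemma HeisC_zpow_s9 (k : ℤ) : HeisC ^ k = H 0 0 k := by rw [HC]; exact H_zpow_C k

lemma exists_word_nat (k : ℕ) :
    ∃ l : List Heis, (∀ s ∈ l, s ∈ HeisS) ∧ l.length ≤ 5 * Nat.sqrt k + 4 ∧
      l.prod = H 0 0 (k : ℤ) := by
  set p := Nat.sqrt k with hp
  set q := k / p with hq
  set r := k % p with hr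
  have hk : p * q + r = k := Nat.div_add_mod k p
  have hqlt : q ≤ p + 2 := by
    rcases Nat.eq_zero_or_pos p with h0 | h0
    · have : k = 0 := by
        have := Nat.sqrt_eq_zero.mp (hp ▸ h0)
        omega
      simp [hq, this]
    · have hlt : k < (p + 3) * p := by
        have := Nat.lt_succ_sqrt k
        nlinarith [this]
      have := (Nat.div_lt_iff_lt_mul h0).mpr hlt
      omega
  have hrlt : r ≤ p := by
    rcases Nat.eq_zero_or_pos p with h0 | h0
    · have : k = 0 := by
        have := Nat.sqrt_eq_zero.mp (hp ▸ h0)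
        omega
      simp [hr, this, h0]
    · exact le_of_lt (Nat.mod_lt _ h0)
  refine ⟨List.replicate p HeisA ++ List.replicate q HeisB ++ List.replicate p HeisA⁻¹ ++
      List.replicate q HeisB⁻¹ ++ List.replicate r HeisC, ?_, ?_, ?_⟩
  · intro s hs
    simp only [List.mem_append, List.mem_replicate] at hs
    rcases hs with ((((⟨_, h⟩ | ⟨_, h⟩) | ⟨_, h⟩) | ⟨_, h⟩) | ⟨_, h⟩) <;> subst h <;>
      simp [HeisS]
  · simp only [List.length_append, List.length_replicate]
    omega
  · have hAi : (H 1 0 0)⁻¹ = H (-1) 0 0 := by rw [H_inv]; norm_num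
    have hBi : (H 0 1 0)⁻¹ = H 0 (-1) 0 := by rw [H_inv]; norm_num
    simp only [List.prod_append, List.prod_replicate, HA, HB, HC, hAi, hBi,
      H_pow_A, H_pow_B, H_pow_Cnat, H_mul]
    congr 1 <;> push_cast [← hk] <;> ring

lemma exists_word (k : ℤ) :
    ∃ l : List Heis, (∀ s ∈ l, s ∈ HeisS) ∧ l.length ≤ 5 * Nat.sqrt k.natAbs + 4 ∧
      l.prod = HeisC ^ k := by
  rcases le_or_gt 0 k with hk | hk
  · obtain ⟨l, h1, h2, h3⟩ := exists_word_nat k.toNat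
    refine ⟨l, h1, ?_, ?_⟩
    · have hkk : k.toNat = k.natAbs := by omega
      rwa [hkk] at h2
    · rw [h3, HeisC_zpow_s9, Int.toNat_of_nonneg hk]
  · obtain ⟨l, h1, h2, h3⟩ := exists_word_nat (-k).toNat
    refine ⟨(l.map (·⁻¹)).reverse, ?_, ?_, ?_⟩
    · intro s hs
      simp only [List.mem_reverse, List.mem_map] at hs
      obtain ⟨u, hu, rfl⟩ := hs
      exact S_inv (h1 u hu)
    · simp only [List.length_reverse, List.length_map]
      have : (-k).toNat = k.natAbs := by omega
      rwa [this] at h2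
    · rw [← List.prod_inv_reverse]
      have hkk : (((-k).toNat : ℤ)) = -k := by omega
      rw [h3, H_inv, HeisC_zpow_s9, hkk]
      congr 1 <;> ring

theorem heisenberg_center_distortion :
    ∃ C₁ C₂ : ℝ, 0 < C₁ ∧ C₁ ≤ C₂ ∧ ∀ m n : ℤ,
      C₁ * Real.sqrt |(m : ℝ) - n| ≤
        (wordDist {HeisA, HeisA⁻¹, HeisB, HeisB⁻¹, HeisC, HeisC⁻¹} (HeisC ^ m) (HeisC ^ n) : ℝ) ∧
      (wordDist {HeisA, HeisA⁻¹, HeisB, HeisB⁻¹, HeisC, HeisC⁻¹} (HeisC ^ m) (HeisC ^ n) : ℝ) ≤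
        C₂ * Real.sqrt |(m : ℝ) - n| := by
  refine ⟨1, 9, one_pos, by norm_num, fun m n => ?_⟩
  set k : ℤ := n - m with hkdef
  set K : ℕ := k.natAbs with hKdef
  have hprod : (HeisC ^ m)⁻¹ * HeisC ^ n = HeisC ^ k := by
    rw [hkdef, ← _root_.zpow_neg, ← _root_.zpow_add, neg_add_eq_sub]
  have habs : |(m : ℝ) - n| = (K : ℝ) := by
    have h0 : ((m : ℝ) - n) = -(((k : ℤ) : ℝ)) := by rw [hkdef]; push_cast; ring
    rw [h0, abs_neg, hKdef, Nat.cast_natAbs]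
    exact Int.cast_abs.symm
  set D : ℕ := wordDist {HeisA, HeisA⁻¹, HeisB, HeisB⁻¹, HeisC, HeisC⁻¹}
      (HeisC ^ m) (HeisC ^ n) with hD
  -- the set is HeisS
  have hSdef : ({HeisA, HeisA⁻¹, HeisB, HeisB⁻¹, HeisC, HeisC⁻¹} : Set Heis) = HeisS := rfl
  obtain ⟨l₀, hmem₀, hlen₀, hprod₀⟩ := exists_word k
  have hne : {j : ℕ | ∃ l : List Heis, (∀ s ∈ l, s ∈ HeisS) ∧ l.length = j ∧
      (HeisC ^ m)⁻¹ * HeisC ^ n = l.prod}.Nonempty :=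
    ⟨l₀.length, l₀, hmem₀, rfl, by rw [hprod, hprod₀]⟩
  have hDle : D ≤ l₀.length := Nat.sInf_le ⟨l₀, hmem₀, rfl, by rw [hprod, hprod₀]⟩
  -- lower bound
  obtain ⟨l, hmem, hlen, hpr⟩ := Nat.sInf_mem hne
  have hlow : (K : ℤ) ≤ (D : ℤ)^2 := by
    obtain ⟨x, y, z, hxyz, _, _, hz⟩ := prod_bound l hmem
    have hck : H 0 0 k = H x y z := by rw [← HeisC_zpow_s9, ← hxyz, ← hpr, hprod]
    have hkz : k = z := by
      have := congrArg (fun M : Heis => M.1 0 2) hck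
      simpa [H_z] using this
    rw [hlen] at hz
    rw [hKdef, ← Int.abs_eq_natAbs, hkz]
    exact hz
  constructor
  · -- C₁ √|m-n| ≤ D
    rw [habs, one_mul]
    have h1 : (K : ℝ) ≤ ((D : ℝ))^2 := by exact_mod_cast hlow
    calc Real.sqrt K ≤ Real.sqrt ((D : ℝ)^2) := Real.sqrt_le_sqrt h1
      _ = (D : ℝ) := Real.sqrt_sq (Nat.cast_nonneg D)
  · -- D ≤ 9 √|m-n|
    rw [habs]
    rcases Nat.eq_zero_or_pos K with hK0 | hKpos
    · have hk0 : k = 0 := by omega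
      have : D ≤ 0 := Nat.sInf_le ⟨[], by simp, rfl, by rw [hprod, hk0]; simp⟩
      interval_cases D
      simp [hK0]
    · have hs2 : ((Nat.sqrt K : ℝ))^2 ≤ (K : ℝ) := by
        exact_mod_cast Nat.sqrt_le' K
      have hsK : (Nat.sqrt K : ℝ) ≤ Real.sqrt K := by
        calc (Nat.sqrt K : ℝ) = Real.sqrt ((Nat.sqrt K : ℝ)^2) :=
              (Real.sqrt_sq (Nat.cast_nonneg _)).symm
          _ ≤ Real.sqrt K := Real.sqrt_le_sqrt hs2
      have h1K : (1 : ℝ) ≤ Real.sqrt K := by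
        rw [show (1:ℝ) = Real.sqrt 1 by simp]
        exact Real.sqrt_le_sqrt (by exact_mod_cast hKpos)
      have hDle' : (D : ℝ) ≤ 5 * (Nat.sqrt K : ℝ) + 4 := by
        have : D ≤ 5 * Nat.sqrt K + 4 := le_trans hDle hlen₀
        exact_mod_cast this
      nlinarith
end

section
/- Define dim_AN(X) ≤ n (Assouad-Nagata dimension at most n) for a metric space X to mean: there exists K > 0 such that for every r > 0, X can be written as X₀ ∪ … ∪ X_n where every r-component of each Xᵢ is (K·r)-bounded. If f : X → Y is λ-Lipschitz with all fibers ultrametric and dist(x, f⁻¹(y)) ≤ dist(f(x), y) for all x ∈ X, y ∈ f(X), then dim_AN(X) ≤ dim_AN(Y). -/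
open Metric Set

/-- `dim_AN(X) ≤ n`: there is `K > 0` such that for every `r > 0`, `X` can be written
as `X₀ ∪ … ∪ X_n` where every `r`-component of each `Xᵢ` is `K·r`-bounded. -/
def ANdimLE (X : Type*) [MetricSpace X] (n : ℕ) : Prop :=
  ∃ K : ℝ, 0 < K ∧ ∀ r : ℝ, 0 < r →
    ∃ C : Fin (n + 1) → Set X, (⋃ i, C i) = univ ∧
      ∀ i, ∀ p q : X, ChainConn (C i) r p q → dist p q ≤ K * r

/-- The Assouad-Nagata dimension of `X`, as an element of `ℕ∞`. -/
noncomputable def ANdim (X : Type*) [MetricSpace X] : ℕ∞ :=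
  sInf {m : ℕ∞ | ∃ n : ℕ, m = n ∧ ANdimLE X n}

/-- Chain bound in a set `F` satisfying the ultrametric inequality: if a chain has steps `< r`
and each point `z` has a "shadow" `g z ∈ F` at distance `< B + r`, then the shadows of the
endpoints are at distance at most `2B + 3r`. -/
lemma ultra_chain_aux {X : Type*} [MetricSpace X] (F : Set X)
    (hultra : ∀ p q s : X, p ∈ F → q ∈ F → s ∈ F → dist p s ≤ max (dist p q) (dist q s))
    (g : X → X) (r B : ℝ) (hr : 0 < r) (hB : 0 ≤ B) :
    ∀ l : List X, l.Chain' (fun u v => dist u v < r) →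
      (∀ z ∈ l, g z ∈ F ∧ dist z (g z) < B + r) →
      ∀ p q, l.head? = some p → l.getLast? = some q → dist (g p) (g q) ≤ 2 * B + 3 * r := by
  intro l
  induction l with
  | nil => intro _ _ p q hp; simp at hp
  | cons a l ih =>
    intro hch hmem p q hp hq
    simp only [List.head?_cons, Option.some.injEq] at hp
    subst hp
    match l with
    | [] =>
      simp only [List.getLast?_singleton, Option.some.injEq] at hq
      subst hq
      simp only [dist_self]
      linarith
    | b :: l' =>
      simp only [List.Chain', List.isChain_cons_cons] at hch
      rw [List.getLast?_cons_cons] at hq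
      have hb : dist (g b) (g q) ≤ 2 * B + 3 * r :=
        ih hch.2 (fun z hz => hmem z (List.mem_cons_of_mem _ hz)) b q rfl hq
      have hpF := hmem a (by simp)
      have hbF := hmem b (by simp)
      have hqF : g q ∈ F := (hmem q (List.mem_cons_of_mem _
        (List.mem_of_mem_getLast? (by simp [hq])))).1
      have hab : dist (g a) (g b) ≤ 2 * B + 3 * r := by
        have h1 := dist_triangle (g a) a (g b)
        have h2 := dist_triangle a b (g b)
        have h3 : dist (g a) a = dist a (g a) := dist_comm _ _
        have := hpF.2
        have := hbF.2
        have := hch.1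
        linarith
      calc dist (g a) (g q) ≤ max (dist (g a) (g b)) (dist (g b) (g q)) :=
            hultra _ _ _ hpF.1 hbF.1 hqF
        _ ≤ 2 * B + 3 * r := max_le hab hb

/-- Every member of a chain is chain-connected to the head. -/
lemma chainConn_head_mem {X : Type*} [MetricSpace X] (A : Set X) (s : ℝ) :
    ∀ l : List X, (∀ z ∈ l, z ∈ A) → l.Chain' (fun u v => dist u v < s) →
      ∀ p, l.head? = some p → ∀ z ∈ l, ChainConn A s p z := by
  intro l
  induction l with
  | nil => intro _ _ p hp; simp at hp
  | cons a l ih =>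
    intro hmem hch p hp z hz
    simp only [List.head?_cons, Option.some.injEq] at hp
    subst hp
    rcases List.mem_cons.1 hz with rfl | hz'
    · exact ⟨[z], by simpa using hmem z (by simp), rfl, rfl, List.isChain_singleton z⟩
    · clear hz
      match l with
      | [] => simp at hz'
      | b :: l' =>
        simp only [List.Chain', List.isChain_cons_cons] at hch
        obtain ⟨w, hw1, hw2, hw3, hw4⟩ :=
          ih (fun u hu => hmem u (List.mem_cons_of_mem _ hu)) hch.2 b rfl z hz'
        match w with
        | [] => simp at hw2
        | c :: w' =>
          simp only [List.head?_cons, Option.some.injEq] at hw2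
          subst hw2
          refine ⟨a :: c :: w', ?_, rfl, by rw [List.getLast?_cons_cons]; exact hw3, ?_⟩
          · intro u hu
            rcases List.mem_cons.1 hu with rfl | hu'
            · exact hmem u (by simp)
            · exact hw1 u hu'
          · simp only [List.Chain', List.isChain_cons_cons]
            exact ⟨hch.1, hw4⟩

/-- The key step: `ANdimLE` pulls back along such a map. -/
lemma andimLE_of_ultrametric_fibers {X Y : Type*} [MetricSpace X] [MetricSpace Y]
    (f : X → Y) (lam : ℝ) (hLip : ∀ a b : X, dist (f a) (f b) ≤ lam * dist a b)
    (hultra : ∀ y : Y, ∀ p q s : X, p ∈ f ⁻¹' {y} → q ∈ f ⁻¹' {y} → s ∈ f ⁻¹' {y} →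
      dist p s ≤ max (dist p q) (dist q s))
    (hpar : ∀ (x : X), ∀ y ∈ Set.range f, infDist x (f ⁻¹' {y}) ≤ dist (f x) y)
    (n : ℕ) (hY : ANdimLE Y n) : ANdimLE X n := by
  rcases le_or_gt lam 0 with hlam | hlam
  · -- `f` is constant, so `X` is a single ultrametric fiber.
    refine ⟨3, by norm_num, fun r hr => ⟨fun _ => univ, eq_univ_of_forall (fun x => mem_iUnion.2 ⟨0, trivial⟩), ?_⟩⟩
    rintro i p q ⟨l, hmem, hh, hl, hch⟩
    have hconst : ∀ z : X, f z = f p := by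
      intro z
      have h1 := hLip z p
      have h2 : lam * dist z p ≤ 0 := mul_nonpos_of_nonpos_of_nonneg hlam dist_nonneg
      have : dist (f z) (f p) ≤ 0 := h1.trans h2
      exact dist_le_zero.1 this
    have := ultra_chain_aux (f ⁻¹' {f p}) (hultra (f p)) id r 0 hr le_rfl l hch
      (fun z _ => ⟨hconst z, by simpa using hr⟩) p q hh hl
    simp only [id_eq] at this
    linarith
  · obtain ⟨K, hK, hYd⟩ := hY
    refine ⟨4 * K * lam + 5, by positivity, fun r hr => ?_⟩
    obtain ⟨D, hDu, hDb⟩ := hYd (lam * r) (by positivity)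
    refine ⟨fun i => f ⁻¹' (D i), ?_, ?_⟩
    · rw [← preimage_iUnion, hDu, preimage_univ]
    rintro i p q ⟨l, hmem, hh, hl, hch⟩
    set B : ℝ := K * (lam * r) with hBdef
    have hB : 0 ≤ B := by positivity
    set F : Set X := f ⁻¹' {f p} with hFdef
    have hFne : F.Nonempty := ⟨p, rfl⟩
    -- every point of the chain has image within B of f p
    have himg : ∀ z ∈ l, dist (f p) (f z) ≤ B := by
      intro z hz
      obtain ⟨w, hw1, hw2, hw3, hw4⟩ := chainConn_head_mem _ _ l hmem hch p hh z hz
      have : ChainConn (D i) (lam * r) (f p) (f z) := by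
        refine ⟨w.map f, ?_, ?_, ?_, ?_⟩
        · intro u hu
          obtain ⟨v, hv, rfl⟩ := List.mem_map.1 hu
          exact hw1 v hv
        · rw [List.head?_map, hw2]; rfl
        · rw [List.getLast?_map, hw3]; rfl
        · simp only [List.Chain', List.isChain_map]
          refine hw4.imp ?_
          intro a b hab
          calc dist (f a) (f b) ≤ lam * dist a b := hLip a b
            _ < lam * r := by exact mul_lt_mul_of_pos_left hab hlam
      exact hDb i _ _ this
    -- choose shadows in F
    have hshadow : ∀ z ∈ l, ∃ w ∈ F, dist z w < B + r := by
      intro z hz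
      have h1 : infDist z F ≤ B := (hpar z (f p) ⟨p, rfl⟩).trans
        (by rw [dist_comm]; exact himg z hz)
      have h2 : infDist z F < B + r := h1.trans_lt (by linarith)
      exact (infDist_lt_iff hFne).1 h2
    classical
    set g : X → X := fun z => if h : ∃ w ∈ F, dist z w < B + r then h.choose else p with hgdef
    have hg : ∀ z ∈ l, g z ∈ F ∧ dist z (g z) < B + r := by
      intro z hz
      have h := hshadow z hz
      simp only [hgdef, dif_pos h]
      exact ⟨h.choose_spec.1, h.choose_spec.2⟩
    have hmain := ultra_chain_aux F (hultra (f p)) g r B hr hB l hch hg p q hh hl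
    have hpl : p ∈ l := List.mem_of_mem_head? (by simp [hh])
    have hql : q ∈ l := List.mem_of_mem_getLast? (by simp [hl])
    have hgp := hg p hpl
    have hgq := hg q hql
    have h1 := dist_triangle p (g p) q
    have h2 := dist_triangle (g p) (g q) q
    have h3 : dist (g q) q = dist q (g q) := dist_comm _ _
    have : dist p q ≤ (B + r) + (2 * B + 3 * r) + (B + r) := by linarith [hgp.2, hgq.2]
    calc dist p q ≤ (B + r) + (2 * B + 3 * r) + (B + r) := this
      _ = 4 * B + 5 * r := by ring
      _ = (4 * K * lam + 5) * r := by rw [hBdef]; ring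

/-- If `f : X → Y` is `lam`-Lipschitz with all fibers ultrametric and
`dist(x, f⁻¹(y)) ≤ dist(f x, y)` for `y ∈ f(X)`, then `dim_AN(X) ≤ dim_AN(Y)`. -/
theorem ANdim_le_of_ultrametric_fibers {X Y : Type*} [MetricSpace X] [MetricSpace Y]
    (f : X → Y) (lam : ℝ) (hLip : ∀ a b : X, dist (f a) (f b) ≤ lam * dist a b)
    (hultra : ∀ y : Y, ∀ p q s : X, p ∈ f ⁻¹' {y} → q ∈ f ⁻¹' {y} → s ∈ f ⁻¹' {y} →
      dist p s ≤ max (dist p q) (dist q s))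
    (hpar : ∀ (x : X), ∀ y ∈ Set.range f, infDist x (f ⁻¹' {y}) ≤ dist (f x) y) :
    ANdim X ≤ ANdim Y := by
  apply le_sInf
  rintro m ⟨n, rfl, hYn⟩
  exact sInf_le ⟨n, rfl, andimLE_of_ultrametric_fibers f lam hLip hultra hpar n hYn⟩
end
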